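/- arXiv:1809.03763 — 2 statements merged into one kernel-verified Lean document; each statement's English description precedes it below -/
import Mathlib

section
/- Let X be a T1 topological space. Then X is stratifiable if and only if there exists a function g : ℕ → X → Set X such that: each set g(n,x) is open and contains x; g(n+1,x) ⊆ g(n,x) for all n ∈ ℕ and x ∈ X; and for every closed set H ⊆ X one has ⋂_{n ∈ ℕ} closure(⋃_{y ∈ H} g(n,y)) = H. -/
open Set Topology

/-- A space is stratifiable if there is a monotone assignment of open sets to closed sets
as in the definition of stratifiable (M₃) spaces. -/
def StratifiableSpace (X : Type*) [TopologicalSpace X] : Prop :=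
  ∃ U : ℕ → Set X → Set X,
    (∀ n H, IsClosed H → IsOpen (U n H)) ∧
    (∀ n H, IsClosed H → H ⊆ U n H) ∧
    (∀ H, IsClosed H → (⋂ n, closure (U n H)) = H) ∧
    (∀ n H K, IsClosed H → IsClosed K → H ⊆ K → U n H ⊆ U n K)

/-- g-function characterization of stratifiable spaces. -/
theorem stratifiable_iff_gFunction (X : Type*) [TopologicalSpace X] [T1Space X] :
    StratifiableSpace X ↔
      ∃ g : ℕ → X → Set X,
        (∀ n x, IsOpen (g n x)) ∧
        (∀ n x, x ∈ g n x) ∧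
        (∀ n x, g (n + 1) x ⊆ g n x) ∧
        (∀ H : Set X, IsClosed H → (⋂ n, closure (⋃ y ∈ H, g n y)) = H) := by
  constructor
  · rintro ⟨U, hopen, hsub, hcl, hmono⟩
    refine ⟨fun n x => ⋂ k ∈ Finset.range (n + 1), U k {x}, ?_, ?_, ?_, ?_⟩
    · intro n x
      exact isOpen_biInter_finset fun k _ => hopen k {x} isClosed_singleton
    · intro n x
      exact mem_iInter₂.2 fun k _ => hsub k {x} isClosed_singleton rfl
    · intro n x
      intro z hz
      refine mem_iInter₂.2 fun k hk => ?_
      exact mem_iInter₂.1 hz k (Finset.mem_range.2 (Nat.lt_succ_of_lt (Finset.mem_range.1 hk)))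
    · intro H hH
      apply subset_antisymm
      · have h1 : ∀ n, (⋃ y ∈ H, ⋂ k ∈ Finset.range (n + 1), U k {y}) ⊆ U n H := by
          intro n z hz
          rcases mem_iUnion₂.1 hz with ⟨y, hy, hzy⟩
          have : z ∈ U n {y} :=
            mem_iInter₂.1 hzy n (Finset.mem_range.2 (Nat.lt_succ_self n))
          exact hmono n {y} H isClosed_singleton hH (singleton_subset_iff.2 hy) this
        calc (⋂ n, closure (⋃ y ∈ H, ⋂ k ∈ Finset.range (n + 1), U k {y}))
            ⊆ ⋂ n, closure (U n H) := iInter_mono fun n => closure_mono (h1 n)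
          _ = H := hcl H hH
      · intro z hz
        refine mem_iInter.2 fun n => subset_closure ?_
        exact mem_iUnion₂.2 ⟨z, hz, mem_iInter₂.2 fun k _ => hsub k {z} isClosed_singleton rfl⟩
  · rintro ⟨g, gopen, gmem, _gdec, gcl⟩
    refine ⟨fun n H => ⋃ y ∈ H, g n y, ?_, ?_, ?_, ?_⟩
    · intro n H _
      exact isOpen_biUnion fun y _ => gopen n y
    · intro n H _ x hx
      exact mem_iUnion₂.2 ⟨x, hx, gmem n x⟩
    · intro H hH
      exact gcl H hH
    · intro n H K _ _ hHK
      exact iUnion₂_mono' fun y hy => ⟨y, hHK hy, subset_rfl⟩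
end

section
/- Let F be a set of functions ℕ → ℕ that is unbounded in the eventual-domination order ≤*. Then for every b ∈ ℕ there exist h ≥ b and α₀ ∈ F such that for every k ∈ ℕ there exists α ∈ F with α(i) = α₀(i) for all i < h and α(h) ≥ k. -/
/-- Eventual domination: `f n ≤ g n` for all but finitely many `n`. -/
def EvLE (f g : ℕ → ℕ) : Prop := ∀ᶠ n in Filter.atTop, f n ≤ g n

/-- A set of functions `ℕ → ℕ` is bounded in the eventual-domination order. -/
def BoundedFam (F : Set (ℕ → ℕ)) : Prop := ∃ g : ℕ → ℕ, ∀ f ∈ F, EvLE f g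

/-- If a family of functions is unbounded, then for every `b` there is a level `h ≥ b`
and a member `α₀` such that functions of the family agreeing with `α₀` below `h` take
arbitrarily large values at `h`. -/
theorem unbounded_exists_level (F : Set (ℕ → ℕ)) (hF : ¬ BoundedFam F) :
    ∀ b : ℕ, ∃ h : ℕ, b ≤ h ∧ ∃ α₀ ∈ F, ∀ k : ℕ,
      ∃ α ∈ F, (∀ i < h, α i = α₀ i) ∧ k ≤ α h := by
  intro b
  classical
  by_contra hcon
  push_neg at hcon
  apply hF
  have claim : ∀ s : ℕ → ℕ, ∀ h : ℕ, ∃ K : ℕ, ∀ α ∈ F,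
      (∀ i < b, α i = s i) → ∀ i < h, α i ≤ K := by
    intro s h
    induction h with
    | zero => exact ⟨0, fun α _ _ i hi => absurd hi (Nat.not_lt_zero i)⟩
    | succ h ih =>
      obtain ⟨K, hK⟩ := ih
      by_cases hb : h < b
      · refine ⟨max K (s h), fun α hα hαs i hi => ?_⟩
        rcases Nat.lt_succ_iff_lt_or_eq.mp hi with hi | rfl
        · exact le_trans (hK α hα hαs i hi) (le_max_left _ _)
        · exact (hαs i hb).le.trans (le_max_right _ _)
      · push_neg at hb
        set key : (Fin h → Fin (K+1)) → ℕ := fun v =>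
          if hc : ∃ α₀, α₀ ∈ F ∧ ∀ i (hi : i < h), α₀ i = (v ⟨i, hi⟩ : ℕ) then
            (hcon h hb hc.choose hc.choose_spec.1).choose
          else 0 with hkey
        refine ⟨max K (Finset.univ.sup key), fun α hα hαs i hi => ?_⟩
        rcases Nat.lt_succ_iff_lt_or_eq.mp hi with hi | hie
        · exact le_trans (hK α hα hαs i hi) (le_max_left _ _)
        · rw [hie]
          have hv : ∀ j : Fin h, α j < K + 1 := fun j =>
            Nat.lt_succ_of_le (hK α hα hαs j j.2)
          set v : Fin h → Fin (K+1) := fun j => ⟨α j, hv j⟩ with hvdef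
          have hc : ∃ α₀, α₀ ∈ F ∧ ∀ i (hi : i < h), α₀ i = (v ⟨i, hi⟩ : ℕ) :=
            ⟨α, hα, fun i hi => rfl⟩
          have hspec := (hcon h hb hc.choose hc.choose_spec.1).choose_spec
          have hagree : ∀ i < h, α i = hc.choose i := by
            intro i hi
            have := hc.choose_spec.2 i hi
            simp [v] at this
            omega
          have hlt : α h < key v := by
            rw [hkey]
            simp only
            rw [dif_pos hc]
            exact hspec α hα hagree
          exact le_trans hlt.le (le_trans (Finset.le_sup (Finset.mem_univ v))
            (le_max_right _ _))
  choose K hKspec using claim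
  let sOf : ℕ → (ℕ → ℕ) := fun j i => (Denumerable.ofNat (List ℕ) j).getD i 0
  refine ⟨fun n => (Finset.range (n+1)).sup (fun j => K (sOf j) (n+1)), fun α hα => ?_⟩
  set L : List ℕ := (List.range b).map α with hL
  set j : ℕ := Encodable.encode L with hj
  have hdec : Denumerable.ofNat (List ℕ) j = L := by
    simp [hj, Denumerable.ofNat_encode]
  have hαs : ∀ i < b, α i = sOf j i := by
    intro i hi
    simp only [sOf, hdec, hL]
    rw [List.getD_eq_getElem?_getD, List.getElem?_map, List.getElem?_range hi]
    rfl
  rw [EvLE, Filter.eventually_atTop]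
  refine ⟨j, fun n hn => ?_⟩
  have h1 : α n ≤ K (sOf j) (n+1) :=
    hKspec (sOf j) (n+1) α hα hαs n (Nat.lt_succ_self n)
  exact le_trans h1 (Finset.le_sup (f := fun j => K (sOf j) (n+1)) (Finset.mem_range.mpr (Nat.lt_succ_of_le hn)))
end
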